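/- arXiv:2205.11630 — 2 statements merged into one kernel-verified Lean document; each statement's English description precedes it below -/
import Mathlib

section
/- Let p > 1/2 be a constant and let X = V(M)_p. Then there exists a constant c > 0 such that, with probability 1 − o(1/k) as k → ∞, every closed, 2-linked A ⊆ L_k with 1 < |A| ≤ log₂ k satisfies |N(A) ∩ X| − |A ∩ X| ≥ c·(|N(A)| − |A|). -/
open MeasureTheory Finset Filter

/-- The Bernoulli(p) measure on `Bool`. -/
noncomputable def bern (p : ℝ) : Measure Bool :=
  ENNReal.ofReal p • Measure.dirac true + ENNReal.ofReal (1 - p) • Measure.dirac false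

/-- Product measure: each coordinate is included independently with probability `p`. -/
noncomputable def pSpace (ι : Type*) [Fintype ι] (p : ℝ) : Measure (ι → Bool) :=
  Measure.pi fun _ => bern p

/-- The random subset determined by an outcome `ω`. -/
def sample {ι : Type*} [Fintype ι] (ω : ι → Bool) : Finset ι :=
  Finset.univ.filter (fun i => ω i = true)

/-- `L_k`: all `k`-element subsets of `[2k-1]`, one side of the middle-two-layers graph `M`. -/
def Lk (k : ℕ) : Finset (Finset (Fin (2 * k - 1))) :=
  (Finset.univ : Finset (Fin (2 * k - 1))).powersetCard k

/-- `L_{k-1}`: all `(k-1)`-element subsets of `[2k-1]`, the other side of `M`. -/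
def Lk1 (k : ℕ) : Finset (Finset (Fin (2 * k - 1))) :=
  (Finset.univ : Finset (Fin (2 * k - 1))).powersetCard (k - 1)

/-- The neighborhood in `M` of a set `A ⊆ L_k`: all `w ∈ L_{k-1}` contained in some `u ∈ A`. -/
def nbrLow (k : ℕ) (A : Finset (Finset (Fin (2 * k - 1)))) : Finset (Finset (Fin (2 * k - 1))) :=
  (Lk1 k).filter (fun w => ∃ u ∈ A, w ⊆ u)

/-- The neighborhood in `M` of a set `A ⊆ L_{k-1}`: all `u ∈ L_k` containing some `w ∈ A`. -/
def nbrHigh (k : ℕ) (A : Finset (Finset (Fin (2 * k - 1)))) : Finset (Finset (Fin (2 * k - 1))) :=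
  (Lk k).filter (fun u => ∃ w ∈ A, w ⊆ u)

/-- `A ⊆ L_k` is closed: no strictly larger `A' ⊆ L_k` has the same neighborhood. -/
def ClosedLow (k : ℕ) (A : Finset (Finset (Fin (2 * k - 1)))) : Prop :=
  ¬ ∃ A' : Finset (Finset (Fin (2 * k - 1))), A' ⊆ Lk k ∧ A ⊂ A' ∧ nbrLow k A' = nbrLow k A

/-- `A ⊆ L_k` is 2-linked: no nonempty proper `B ⊊ A` with `N(B) ∩ N(A \ B) = ∅`. -/
def TwoLinkedLow (k : ℕ) (A : Finset (Finset (Fin (2 * k - 1)))) : Prop :=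
  ¬ ∃ B : Finset (Finset (Fin (2 * k - 1))), B ⊂ A ∧ B.Nonempty ∧
      Disjoint (nbrLow k B) (nbrLow k (A \ B))

/-- `A ⊆ L_{k-1}` is closed: no strictly larger `A' ⊆ L_{k-1}` has the same neighborhood. -/
def ClosedHigh (k : ℕ) (A : Finset (Finset (Fin (2 * k - 1)))) : Prop :=
  ¬ ∃ A' : Finset (Finset (Fin (2 * k - 1))), A' ⊆ Lk1 k ∧ A ⊂ A' ∧ nbrHigh k A' = nbrHigh k A

/-- `A ⊆ L_{k-1}` is 2-linked: no nonempty proper `B ⊊ A` with `N(B) ∩ N(A \ B) = ∅`. -/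
def TwoLinkedHigh (k : ℕ) (A : Finset (Finset (Fin (2 * k - 1)))) : Prop :=
  ¬ ∃ B : Finset (Finset (Fin (2 * k - 1))), B ⊂ A ∧ B.Nonempty ∧
      Disjoint (nbrHigh k B) (nbrHigh k (A \ B))

instance bern_finite (p : ℝ) : IsFiniteMeasure (bern p) := by
  constructor
  rw [bern]
  simp only [Measure.add_apply, Measure.smul_apply, smul_eq_mul]
  exact ENNReal.add_lt_top.2 ⟨ENNReal.mul_lt_top ENNReal.ofReal_lt_top (by simp),
    ENNReal.mul_lt_top ENNReal.ofReal_lt_top (by simp)⟩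

section Prob
variable {ι : Type*} [Fintype ι] [DecidableEq ι] {p : ℝ}

/-- weight of a coordinate value -/
def wt (p : ℝ) (b : Bool) : ℝ := if b then p else 1 - p

lemma wt_nonneg (hp0 : 0 ≤ p) (hp1 : p ≤ 1) (b : Bool) : 0 ≤ wt p b := by
  cases b <;> simp [wt] <;> linarith

lemma bern_singleton (b : Bool) : bern p {b} = ENNReal.ofReal (wt p b) := by
  cases b <;> simp [bern, wt, Measure.dirac_apply]

lemma pSpace_singleton (hp0 : 0 ≤ p) (hp1 : p ≤ 1) (ω : ι → Bool) :
    pSpace ι p {ω} = ENNReal.ofReal (∏ i, wt p (ω i)) := by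
  have h : ({ω} : Set (ι → Bool)) = Set.pi Set.univ (fun i => {ω i}) := by
    ext x; simp [funext_iff, Set.mem_pi]
  rw [pSpace, h, Measure.pi_pi, ENNReal.ofReal_prod_of_nonneg
    (fun i _ => wt_nonneg hp0 hp1 (ω i))]
  exact Finset.prod_congr rfl fun i _ => bern_singleton (ω i)

lemma pSpace_apply (hp0 : 0 ≤ p) (hp1 : p ≤ 1) (E : Set (ι → Bool)) [DecidablePred (· ∈ E)] :
    (pSpace ι p E).toReal = ∑ ω ∈ Finset.univ.filter (· ∈ E), ∏ i, wt p (ω i) := by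
  classical
  have hE : E = ⋃ ω ∈ (Finset.univ.filter (· ∈ E) : Finset (ι → Bool)), ({ω} : Set _) := by
    ext x; simp
  conv_lhs => rw [hE]
  rw [measure_biUnion_finset]
  · rw [Finset.sum_congr rfl fun ω _ => pSpace_singleton hp0 hp1 ω,
      ← ENNReal.ofReal_sum_of_nonneg
        (fun ω _ => Finset.prod_nonneg fun i _ => wt_nonneg hp0 hp1 (ω i)),
      ENNReal.toReal_ofReal]
    exact Finset.sum_nonneg fun ω _ => Finset.prod_nonneg fun i _ => wt_nonneg hp0 hp1 (ω i)
  · intro a _ b _ hab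
    simp [Set.disjoint_singleton_left, hab]
  · intro ω _
    exact MeasurableSet.singleton ω

lemma bern_univ (hp0 : 0 ≤ p) (hp1 : p ≤ 1) : bern p Set.univ = 1 := by
  have h : (Set.univ : Set Bool) = {true} ∪ {false} := by
    ext b; cases b <;> simp
  rw [h, measure_union (by simp) (by simp), bern_singleton, bern_singleton,
    ← ENNReal.ofReal_add (by simpa [wt] using hp0) (by simp [wt]; linarith)]
  simp [wt]

lemma pSpace_isProb (hp0 : 0 ≤ p) (hp1 : p ≤ 1) :
    IsProbabilityMeasure (pSpace ι p) := by
  constructor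
  rw [pSpace, Measure.pi_univ]
  simp only [bern_univ hp0 hp1, Finset.prod_const, one_pow]

lemma chernoff (hp0 : 0 ≤ p) (hp1 : p ≤ 1) (S : Finset ι) (m : ℕ) {τ : ℝ}
    (hτ0 : 0 < τ) (hτ1 : τ ≤ 1) :
    (pSpace ι p {ω | ((S.filter fun i => ω i = true)).card ≤ m}).toReal
      ≤ (p * τ + (1 - p)) ^ S.card / τ ^ m := by
  classical
  rw [pSpace_apply hp0 hp1, le_div_iff₀ (pow_pos hτ0 m), Finset.sum_mul]
  have key : ∀ ω : ι → Bool,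
      (∏ i, wt p (ω i)) * τ ^ ((S.filter fun i => ω i = true)).card
        = ∏ i, (wt p (ω i) * (if i ∈ S ∧ ω i = true then τ else 1)) := by
    intro ω
    rw [Finset.prod_mul_distrib]
    congr 1
    have h1 : (Finset.univ.filter fun i => i ∈ S ∧ ω i = true)
        = S.filter fun i => ω i = true := by
      ext i; simp
    rw [← Finset.prod_filter, h1, Finset.prod_const]
  apply le_trans (Finset.sum_le_sum (g := fun ω =>
      (∏ i, wt p (ω i)) * τ ^ ((S.filter fun i => ω i = true)).card) ?_)
  · apply le_trans (Finset.sum_le_sum_of_subset_of_nonneg (Finset.filter_subset _ _) ?_)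
    · have heq : ∑ ω : ι → Bool,
          (∏ i, wt p (ω i)) * τ ^ ((S.filter fun i => ω i = true)).card
          = (p * τ + (1 - p)) ^ S.card := by
        calc ∑ ω : ι → Bool,
              (∏ i, wt p (ω i)) * τ ^ ((S.filter fun i => ω i = true)).card
            = ∑ ω : ι → Bool, ∏ i,
              (wt p (ω i) * (if i ∈ S ∧ ω i = true then τ else 1)) :=
              Finset.sum_congr rfl fun ω _ => key ω
          _ = ∏ i, ∑ b : Bool, (wt p b * (if i ∈ S ∧ b = true then τ else 1)) := by
              rw [Fintype.prod_sum]
          _ = ∏ i, (if i ∈ S then p * τ + (1 - p) else 1) := by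
              apply Finset.prod_congr rfl
              intro i _
              rw [Fintype.sum_bool]
              by_cases h : i ∈ S <;> simp [wt, h] <;> ring
          _ = (p * τ + (1 - p)) ^ S.card := by
              rw [← Finset.prod_filter, Finset.prod_const, Finset.filter_univ_mem]
      exact le_of_eq heq
    · intro ω _ _
      exact mul_nonneg (Finset.prod_nonneg fun i _ => wt_nonneg hp0 hp1 (ω i))
        (pow_nonneg hτ0.le _)
  · intro ω hω
    have hm : ((S.filter fun i => ω i = true)).card ≤ m := by
      have := (Finset.mem_filter.1 hω).2
      simpa using this
    exact mul_le_mul_of_nonneg_left (pow_le_pow_of_le_one hτ0.le hτ1 hm)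
      (Finset.prod_nonneg fun i _ => wt_nonneg hp0 hp1 (ω i))
end Prob

section Graph
variable {k : ℕ}

lemma mem_Lk {u : Finset (Fin (2*k-1))} : u ∈ Lk k ↔ u.card = k := by
  simp [Lk, Finset.mem_powersetCard_univ]

lemma mem_Lk1 {w : Finset (Fin (2*k-1))} : w ∈ Lk1 k ↔ w.card = k - 1 := by
  simp [Lk1, Finset.mem_powersetCard_univ]

lemma nbrLow_singleton {u : Finset (Fin (2*k-1))} (hu : u ∈ Lk k) :
    nbrLow k {u} = u.powersetCard (k-1) := by
  ext w
  simp only [nbrLow, Finset.mem_filter, mem_Lk1, Finset.mem_powersetCard,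
    Finset.mem_singleton]
  constructor
  · rintro ⟨hw, u', rfl, hsub⟩; exact ⟨hsub, hw⟩
  · rintro ⟨hsub, hw⟩; exact ⟨hw, u, rfl, hsub⟩

lemma nbrLow_singleton_card (hk : 1 ≤ k) {u : Finset (Fin (2*k-1))} (hu : u ∈ Lk k) :
    (nbrLow k {u}).card = k := by
  rw [nbrLow_singleton hu, Finset.card_powersetCard, mem_Lk.1 hu]
  rw [← Nat.choose_symm (Nat.sub_le k 1), Nat.sub_sub_self hk, Nat.choose_one_right]

lemma nbrLow_insert (u : Finset (Fin (2*k-1))) (A : Finset (Finset (Fin (2*k-1)))) :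
    nbrLow k (insert u A) = nbrLow k {u} ∪ nbrLow k A := by
  ext w
  simp only [nbrLow, Finset.mem_union, Finset.mem_filter, Finset.mem_insert,
    Finset.mem_singleton]
  constructor
  · rintro ⟨hw, v, (rfl | hv), hsub⟩
    · exact Or.inl ⟨hw, v, rfl, hsub⟩
    · exact Or.inr ⟨hw, v, hv, hsub⟩
  · rintro (⟨hw, v, rfl, hsub⟩ | ⟨hw, v, hv, hsub⟩)
    · exact ⟨hw, v, Or.inl rfl, hsub⟩
    · exact ⟨hw, v, Or.inr hv, hsub⟩

lemma nbrLow_inter_card {u : Finset (Fin (2*k-1))} {A : Finset (Finset (Fin (2*k-1)))}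
    (hu : u ∈ Lk k) (hA : A ⊆ Lk k) (huA : u ∉ A) :
    (nbrLow k {u} ∩ nbrLow k A).card ≤ A.card := by
  have hsub : nbrLow k {u} ∩ nbrLow k A ⊆ A.image (fun v => u ∩ v) := by
    intro w hw
    rw [Finset.mem_inter] at hw
    obtain ⟨hw1, hw2⟩ := hw
    rw [nbrLow_singleton hu, Finset.mem_powersetCard] at hw1
    obtain ⟨hwu, hwcard⟩ := hw1
    rw [nbrLow, Finset.mem_filter] at hw2
    obtain ⟨-, v, hv, hwv⟩ := hw2
    rw [Finset.mem_image]
    refine ⟨v, hv, ?_⟩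
    have hvk : v.card = k := mem_Lk.1 (hA hv)
    have huk : u.card = k := mem_Lk.1 hu
    have hne : v ≠ u := fun h => huA (h ▸ hv)
    have hsub2 : w ⊆ u ∩ v := Finset.subset_inter hwu hwv
    have hlt : (u ∩ v).card < k := by
      rcases lt_or_eq_of_le (le_trans (Finset.card_le_card Finset.inter_subset_left)
        huk.le) with h | h
      · exact h
      · exfalso
        have : u ∩ v = u := Finset.eq_of_subset_of_card_le Finset.inter_subset_left
          (by omega)
        have : u ⊆ v := this ▸ Finset.inter_subset_right
        exact hne (Finset.eq_of_subset_of_card_le this (by omega)).symm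
    exact (Finset.eq_of_subset_of_card_le hsub2 (by omega)).symm
  exact le_trans (Finset.card_le_card hsub) (Finset.card_image_le)

lemma nbrLow_card_lower (hk : 1 ≤ k) {A : Finset (Finset (Fin (2*k-1)))} (hA : A ⊆ Lk k) :
    A.card * k ≤ (nbrLow k A).card + A.card * A.card := by
  classical
  induction A using Finset.induction_on with
  | empty => simp
  | @insert u A huA ih =>
    have hu : u ∈ Lk k := hA (Finset.mem_insert_self u A)
    have hA' : A ⊆ Lk k := fun v hv => hA (Finset.mem_insert_of_mem hv)
    have ihA := ih hA'
    have hcard : (insert u A).card = A.card + 1 := Finset.card_insert_of_notMem huA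
    have hun : nbrLow k (insert u A) = nbrLow k {u} ∪ nbrLow k A := nbrLow_insert u A
    have hform : (nbrLow k {u} ∪ nbrLow k A).card + (nbrLow k {u} ∩ nbrLow k A).card
        = (nbrLow k {u}).card + (nbrLow k A).card := Finset.card_union_add_card_inter _ _
    have hint : (nbrLow k {u} ∩ nbrLow k A).card ≤ A.card :=
      nbrLow_inter_card hu hA' huA
    have hsing : (nbrLow k {u}).card = k := nbrLow_singleton_card hk hu
    rw [hcard, hun]
    nlinarith [ihA]
end Graph

section Ball
variable {k : ℕ}

def stepR (k : ℕ) (x y : Finset (Fin (2*k-1))) : Prop :=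
  ∃ w : Finset (Fin (2*k-1)), w ⊆ x ∧ w ⊆ y ∧ w.card = k - 1

instance (k : ℕ) (x y : Finset (Fin (2*k-1))) : Decidable (stepR k x y) := by
  unfold stepR; infer_instance

def ball (k : ℕ) (u : Finset (Fin (2*k-1))) : ℕ → Finset (Finset (Fin (2*k-1)))
  | 0 => {u}
  | n+1 => ball k u n ∪ (ball k u n).biUnion (fun x => (Lk k).filter (stepR k x))

lemma ball_subset_succ (u : Finset (Fin (2*k-1))) (n : ℕ) :
    ball k u n ⊆ ball k u (n+1) := Finset.subset_union_left

lemma ball_mono (u : Finset (Fin (2*k-1))) {n m : ℕ} (h : n ≤ m) :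
    ball k u n ⊆ ball k u m := by
  induction m with
  | zero => simpa [Nat.le_zero.1 h]
  | succ m ih =>
    rcases Nat.lt_or_ge n (m+1) with h' | h'
    · exact (ih (Nat.lt_succ_iff.1 h')).trans (ball_subset_succ u m)
    · have : n = m + 1 := le_antisymm h h'
      subst this; exact Finset.Subset.refl _

lemma ball_subset_Lk {u : Finset (Fin (2*k-1))} (hu : u ∈ Lk k) (n : ℕ) :
    ball k u n ⊆ Lk k := by
  induction n with
  | zero => simpa [ball]
  | succ n ih =>
    rw [ball]
    apply Finset.union_subset ih
    intro y hy
    rw [Finset.mem_biUnion] at hy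
    obtain ⟨x, -, hy⟩ := hy
    exact (Finset.mem_filter.1 hy).1

lemma step_card (hk : 1 ≤ k) {x : Finset (Fin (2*k-1))} (hx : x ∈ Lk k) :
    ((Lk k).filter (stepR k x)).card ≤ k * (2*k-1) := by
  have hsub : (Lk k).filter (stepR k x) ⊆
      (x.powersetCard (k-1)).biUnion
        (fun w => Finset.univ.image (fun z : Fin (2*k-1) => insert z w)) := by
    intro y hy
    rw [Finset.mem_filter] at hy
    obtain ⟨hyL, w, hwx, hwy, hwc⟩ := hy
    have hyk : y.card = k := mem_Lk.1 hyL
    rw [Finset.mem_biUnion]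
    refine ⟨w, Finset.mem_powersetCard.2 ⟨hwx, hwc⟩, ?_⟩
    have hne : (y \ w).Nonempty := by
      rw [← Finset.card_pos, Finset.card_sdiff_of_subset hwy]
      omega
    obtain ⟨z, hz⟩ := hne
    rw [Finset.mem_sdiff] at hz
    have hins : insert z w ⊆ y := Finset.insert_subset hz.1 hwy
    have hcard : (insert z w).card = k := by
      rw [Finset.card_insert_of_notMem hz.2]; omega
    have : insert z w = y := Finset.eq_of_subset_of_card_le hins (by omega)
    rw [Finset.mem_image]
    exact ⟨z, Finset.mem_univ z, this⟩
  apply le_trans (Finset.card_le_card hsub)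
  apply le_trans (Finset.card_biUnion_le)
  have himg : ∀ w : Finset (Fin (2*k-1)),
      (Finset.univ.image (fun z : Fin (2*k-1) => insert z w)).card ≤ 2*k-1 := by
    intro w
    apply le_trans Finset.card_image_le
    simp
  apply le_trans (Finset.sum_le_sum (fun w _ => himg w))
  rw [Finset.sum_const, smul_eq_mul, Finset.card_powersetCard, mem_Lk.1 hx]
  have : k.choose (k-1) = k := by
    rw [← Nat.choose_symm (Nat.sub_le k 1), Nat.sub_sub_self hk, Nat.choose_one_right]
  rw [this]

lemma ball_card (hk : 1 ≤ k) {u : Finset (Fin (2*k-1))} (hu : u ∈ Lk k) (n : ℕ) :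
    (ball k u n).card ≤ (1 + k*(2*k-1))^n := by
  induction n with
  | zero => simp [ball]
  | succ n ih =>
    rw [ball]
    apply le_trans (Finset.card_union_le _ _)
    have h2 : ((ball k u n).biUnion (fun x => (Lk k).filter (stepR k x))).card
        ≤ (ball k u n).card * (k * (2*k-1)) := by
      apply le_trans (Finset.card_biUnion_le)
      apply le_trans (Finset.sum_le_sum (fun x hx => step_card hk (ball_subset_Lk hu n hx)))
      rw [Finset.sum_const, smul_eq_mul]
    calc (ball k u n).card + ((ball k u n).biUnion _).card
        ≤ (ball k u n).card + (ball k u n).card * (k * (2*k-1)) := by omega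
      _ = (ball k u n).card * (1 + k * (2*k-1)) := by ring
      _ ≤ (1 + k*(2*k-1))^n * (1 + k * (2*k-1)) := Nat.mul_le_mul_right _ ih
      _ = (1 + k*(2*k-1))^(n+1) := by ring

lemma twoLinked_subset_ball {A : Finset (Finset (Fin (2*k-1)))} {u : Finset (Fin (2*k-1))}
    (hA : A ⊆ Lk k) (ht : TwoLinkedLow k A) (hu : u ∈ A) :
    A ⊆ ball k u (A.card - 1) := by
  have claim : ∀ j : ℕ, A ⊆ ball k u j ∨ j + 1 ≤ (A ∩ ball k u j).card := by
    intro j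
    induction j with
    | zero =>
      right
      have : u ∈ A ∩ ball k u 0 := Finset.mem_inter.2 ⟨hu, by simp [ball]⟩
      exact Finset.card_pos.2 ⟨u, this⟩
    | succ j ih =>
      rcases ih with h | h
      · exact Or.inl (h.trans (ball_subset_succ u j))
      · by_cases hsub : A ⊆ ball k u (j+1)
        · exact Or.inl hsub
        right
        set B := A ∩ ball k u j with hBdef
        have hBA : B ⊆ A := Finset.inter_subset_left
        have hBne : B.Nonempty := Finset.card_pos.1 (by omega)
        have hBss : B ⊂ A := by
          refine Finset.ssubset_iff_subset_ne.2 ⟨hBA, fun hEq => ?_⟩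
          have hAj : A ⊆ ball k u j := Finset.inter_eq_left.1 hEq
          exact hsub (hAj.trans (ball_subset_succ u j))
        have hnd : ¬ Disjoint (nbrLow k B) (nbrLow k (A \ B)) := by
          intro hd
          exact ht ⟨B, hBss, hBne, hd⟩
        rw [Finset.not_disjoint_iff] at hnd
        obtain ⟨w, hw1, hw2⟩ := hnd
        rw [nbrLow, Finset.mem_filter] at hw1 hw2
        obtain ⟨hwL, b, hb, hwb⟩ := hw1
        obtain ⟨-, v, hv, hwv⟩ := hw2
        rw [Finset.mem_sdiff] at hv
        have hvL : v ∈ Lk k := hA hv.1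
        have hbball : b ∈ ball k u j := (Finset.mem_inter.1 hb).2
        have hstep : stepR k b v := ⟨w, hwb, hwv, mem_Lk1.1 hwL⟩
        have hvball : v ∈ ball k u (j+1) := by
          rw [ball]
          apply Finset.mem_union_right
          rw [Finset.mem_biUnion]
          exact ⟨b, hbball, Finset.mem_filter.2 ⟨hvL, hstep⟩⟩
        have hvB : v ∉ B := hv.2
        have hins : insert v B ⊆ A ∩ ball k u (j+1) := by
          apply Finset.insert_subset (Finset.mem_inter.2 ⟨hv.1, hvball⟩)
          exact Finset.subset_inter hBA ((Finset.inter_subset_right).trans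
            (ball_subset_succ u j))
        have := Finset.card_le_card hins
        rw [Finset.card_insert_of_notMem hvB] at this
        omega
  rcases claim (A.card - 1) with h | h
  · exact h
  · have hAne : A.Nonempty := ⟨u, hu⟩
    have hc1 : 1 ≤ A.card := Finset.card_pos.2 hAne
    have hle : A.card ≤ (A ∩ ball k u (A.card - 1)).card := by omega
    exact Finset.inter_eq_left.1
      (Finset.eq_of_subset_of_card_le Finset.inter_subset_left hle)
end Ball

section Count
variable {k : ℕ}

instance (k : ℕ) (A : Finset (Finset (Fin (2*k-1)))) : Decidable (TwoLinkedLow k A) := by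
  unfold TwoLinkedLow; infer_instance

lemma Lk_card_le (hk : 1 ≤ k) : (Lk k).card ≤ 4^k := by
  rw [Lk, Finset.card_powersetCard, Finset.card_univ, Fintype.card_fin]
  have h1 : (2*k-1).choose k ≤ ∑ m ∈ Finset.range (2*k-1+1), (2*k-1).choose m :=
    Finset.single_le_sum (fun i _ => Nat.zero_le _) (Finset.mem_range.2 (by omega))
  rw [Nat.sum_range_choose] at h1
  calc (2*k-1).choose k ≤ 2^(2*k-1) := h1
    _ ≤ 2^(2*k) := Nat.pow_le_pow_right (by norm_num) (by omega)
    _ = 4^k := by rw [pow_mul]; norm_num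

lemma count_badsets (hk : 1 ≤ k) (L : ℕ) :
    (((Lk k).powerset).filter
      (fun A => TwoLinkedLow k A ∧ 2 ≤ A.card ∧ A.card ≤ L)).card
      ≤ 4^k * ((L+1) * ((1 + k*(2*k-1))^(L-1) + 1)^L) := by
  classical
  set Bd := (1 + k*(2*k-1))^(L-1) with hBd
  have hsub : ((Lk k).powerset).filter (fun A => TwoLinkedLow k A ∧ 2 ≤ A.card ∧ A.card ≤ L)
      ⊆ (Lk k).biUnion (fun u => ((ball k u (L-1)).powerset).filter (fun A => A.card ≤ L)) := by
    intro A hA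
    rw [Finset.mem_filter, Finset.mem_powerset] at hA
    obtain ⟨hAL, ht, h2, hL⟩ := hA
    have hne : A.Nonempty := Finset.card_pos.1 (by omega)
    obtain ⟨u, hu⟩ := hne
    rw [Finset.mem_biUnion]
    refine ⟨u, hAL hu, ?_⟩
    rw [Finset.mem_filter, Finset.mem_powerset]
    exact ⟨(twoLinked_subset_ball hAL ht hu).trans (ball_mono u (by omega)), hL⟩
  apply le_trans (Finset.card_le_card hsub)
  apply le_trans (Finset.card_biUnion_le)
  have hper : ∀ u ∈ Lk k, (((ball k u (L-1)).powerset).filter (fun A => A.card ≤ L)).card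
      ≤ (L+1) * (Bd + 1)^L := by
    intro u hu
    have hbc : (ball k u (L-1)).card ≤ Bd := ball_card hk hu (L-1)
    have hsub2 : ((ball k u (L-1)).powerset).filter (fun A => A.card ≤ L)
        ⊆ (Finset.range (L+1)).biUnion (fun a => (ball k u (L-1)).powersetCard a) := by
      intro A hA
      rw [Finset.mem_filter, Finset.mem_powerset] at hA
      rw [Finset.mem_biUnion]
      exact ⟨A.card, Finset.mem_range.2 (by omega), Finset.mem_powersetCard.2 ⟨hA.1, rfl⟩⟩
    apply le_trans (Finset.card_le_card hsub2)
    apply le_trans (Finset.card_biUnion_le)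
    have hbnd : ∀ a ∈ Finset.range (L+1),
        ((ball k u (L-1)).powersetCard a).card ≤ (Bd+1)^L := by
      intro a ha
      rw [Finset.card_powersetCard]
      calc ((ball k u (L-1)).card).choose a
          ≤ ((ball k u (L-1)).card)^a := Nat.choose_le_pow _ _
        _ ≤ (Bd+1)^a := Nat.pow_le_pow_left (by omega) a
        _ ≤ (Bd+1)^L := Nat.pow_le_pow_right (by omega)
            (by have := Finset.mem_range.1 ha; omega)
    apply le_trans (Finset.sum_le_sum hbnd)
    rw [Finset.sum_const, Finset.card_range, smul_eq_mul]
  apply le_trans (Finset.sum_le_sum hper)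
  rw [Finset.sum_const, smul_eq_mul]
  exact Nat.mul_le_mul_right _ (Lk_card_le hk)
end Count

set_option maxHeartbeats 2000000 in
/-- For constant `p > 1/2` there is a constant `c > 0` such that with
probability `1 - o(1/k)`, every closed 2-linked `A ⊆ L_k` with `1 < |A| ≤ log₂ k`
satisfies `|N(A) ∩ X| − |A ∩ X| ≥ c(|N(A)| − |A|)`, where `X = V(M)_p`. -/
theorem statement_10 (p : ℝ) (hp : 1 / 2 < p) (hp1 : p ≤ 1) :
    ∃ c : ℝ, 0 < c ∧
      Filter.Tendsto (fun k : ℕ =>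
        (k : ℝ) * ((pSpace (Finset (Fin (2 * k - 1))) p)
          {ω | ¬ ∀ A : Finset (Finset (Fin (2 * k - 1))),
            A ⊆ Lk k → ClosedLow k A → TwoLinkedLow k A →
            1 < A.card → (A.card : ℝ) ≤ Real.logb 2 k →
            c * (((nbrLow k A).card : ℝ) - A.card) ≤
              ((nbrLow k A ∩ sample ω).card : ℝ) - ((A ∩ sample ω).card : ℝ)}).toReal)
        Filter.atTop (nhds 0) := by
  classical
  have hp0 : 0 ≤ p := by linarith
  have hppos : 0 < p := by linarith
  set τ : ℝ := (p - 1/2) / (2*p) with hτdef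
  have hτ0 : 0 < τ := div_pos (by linarith) (by linarith)
  have hτ1 : τ < 1 := by
    rw [hτdef, div_lt_one (by linarith)]; linarith
  set sC : ℝ := p * τ + (1 - p) with hsdef
  have hsval : sC = 3/4 - p/2 := by
    rw [hsdef, hτdef]; field_simp; ring
  have hs0 : 0 < sC := by rw [hsval]; linarith
  have hs12 : sC < 1/2 := by rw [hsval]; linarith
  set lam : ℝ := - Real.log τ with hlamdef
  have hlam : 0 < lam := by
    have := Real.log_neg hτ0 hτ1
    rw [hlamdef]; linarith
  set δ : ℝ := - Real.log (2*sC) / 2 with hδdef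
  have hδ : 0 < δ := by
    have h1 := Real.log_neg (by linarith) (by linarith : 2*sC < 1)
    rw [hδdef]; linarith
  set θ : ℝ := δ + Real.log 2 with hθdef
  have hlog2 : 0 < Real.log 2 := Real.log_pos (by norm_num)
  have hθ : 0 < θ := by rw [hθdef]; linarith
  have hlogs : Real.log sC + δ = -θ := by
    have h2s : Real.log (2*sC) = Real.log 2 + Real.log sC :=
      Real.log_mul (by norm_num) (ne_of_gt hs0)
    rw [hθdef, hδdef, h2s]; ring
  set c : ℝ := δ / lam with hcdef
  have hc : 0 < c := div_pos hδ hlam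
  have hclam : c * lam = δ := div_mul_cancel₀ δ (ne_of_gt hlam)
  refine ⟨c, hc, ?_⟩
  set C1 : ℝ := 19 + 4*θ + 2*lam with hC1def
  have hC1 : 0 < C1 := by rw [hC1def]; linarith
  have hev1 : ∀ᶠ k : ℕ in Filter.atTop, 216 * C1 ≤ δ * ((k:ℝ) ^ ((1:ℝ)/2)) := by
    have ht : Filter.Tendsto (fun k : ℕ => ((k:ℝ) ^ ((1:ℝ)/2))) Filter.atTop Filter.atTop :=
      (tendsto_rpow_atTop (by norm_num)).comp tendsto_natCast_atTop_atTop
    filter_upwards [ht.eventually_ge_atTop (216 * C1 / δ)] with k hk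
    rw [div_le_iff₀ hδ] at hk
    linarith
  apply squeeze_zero' (g := fun k : ℕ => Real.exp (-δ) ^ k)
  · exact Filter.Eventually.of_forall fun k =>
      mul_nonneg (Nat.cast_nonneg k) ENNReal.toReal_nonneg
  · filter_upwards [hev1, Filter.eventually_ge_atTop 25] with k hCev hk25
    -- basic facts about k
    have hk1 : 1 ≤ k := by omega
    have hkR : (25:ℝ) ≤ (k:ℝ) := by exact_mod_cast hk25
    have hkpos : (0:ℝ) < k := by linarith only [hkR]
    set z : ℝ := Real.log k with hzdef
    have hz1 : 1 ≤ z := by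
      rw [hzdef, Real.le_log_iff_exp_le hkpos]
      have h := Real.exp_one_lt_d9
      linarith only [h, hkR]
    have hz0 : 0 ≤ z := by linarith only [hz1]
    set y : ℝ := (k:ℝ) ^ ((1:ℝ)/2) with hydef
    have hy0 : 0 ≤ y := Real.rpow_nonneg (le_of_lt hkpos) _
    have hyy : y * y = (k:ℝ) := by
      rw [hydef, ← Real.rpow_add hkpos]; norm_num
    set x : ℝ := (k:ℝ) ^ ((1:ℝ)/6) with hxdef
    have hx0 : 0 ≤ x := Real.rpow_nonneg (le_of_lt hkpos) _
    have hzx : z ≤ 6 * x := by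
      have h := Real.log_le_rpow_div (le_of_lt hkpos) (show (0:ℝ) < 1/6 by norm_num)
      have h2 : (k:ℝ) ^ ((1:ℝ)/6) / (1/6) = 6 * x := by rw [hxdef]; ring
      rw [hzdef]; linarith only [h, h2]
    have hx3y : x^3 = y := by
      rw [hxdef, hydef, ← Real.rpow_natCast ((k:ℝ) ^ ((1:ℝ)/6)) 3,
        ← Real.rpow_mul (le_of_lt hkpos)]
      norm_num
    have hz216 : z^3 ≤ 216 * y := by
      calc z^3 ≤ (6*x)^3 := pow_le_pow_left₀ hz0 hzx 3
        _ = 216 * x^3 := by ring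
        _ = 216 * y := by rw [hx3y]
    have hCz : C1 * z^3 ≤ δ * (k:ℝ) := by
      have h1 : C1 * z^3 ≤ C1 * (216*y) := mul_le_mul_of_nonneg_left hz216 hC1.le
      have h2 : (216*C1)*y ≤ (δ*y)*y := mul_le_mul_of_nonneg_right hCev hy0
      have h3 : (δ*y)*y = δ*(k:ℝ) := by rw [mul_assoc, hyy]
      linarith only [h1, h2, h3]
    set L : ℕ := ⌊Real.logb 2 (k:ℝ)⌋₊ with hLdef
    have hlogb0 : 0 ≤ Real.logb 2 (k:ℝ) := Real.logb_nonneg (by norm_num) (by linarith)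
    have hLreal : (L:ℝ) ≤ Real.logb 2 (k:ℝ) := Nat.floor_le hlogb0
    have hL2z : (L:ℝ) ≤ 2 * z := by
      have hlb : Real.logb 2 (k:ℝ) ≤ 2 * z := by
        rw [Real.logb, div_le_iff₀ hlog2, hzdef]
        have h22 : (1:ℝ) ≤ 2 * Real.log 2 := by linarith only [Real.log_two_gt_d9]
        have hzk0 : 0 ≤ Real.log (k:ℝ) := by rw [← hzdef]; exact hz0
        nlinarith only [h22, hzk0]
      linarith only [hlb, hLreal]
    have hL1 : 1 ≤ L := by
      apply Nat.le_floor
      rw [Real.logb, le_div_iff₀ hlog2]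
      push_cast
      rw [one_mul]
      exact Real.log_le_log (by norm_num) (by linarith only [hkR])
    have hLr0 : (0:ℝ) ≤ (L:ℝ) := Nat.cast_nonneg L
    have hy4 : 4 ≤ y := by nlinarith only [hyy, hy0, hkR]
    have hzy : z ≤ 2 * y := by
      have h := Real.log_le_rpow_div (le_of_lt hkpos) (show (0:ℝ) < 1/2 by norm_num)
      have h2 : (k:ℝ) ^ ((1:ℝ)/2) / (1/2) = 2 * y := by rw [hydef]; ring
      rw [hzdef]; linarith only [h, h2]
    have hLkR : (L:ℝ) ≤ (k:ℝ) := by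
      have h44 : 4*y ≤ y*y := mul_le_mul_of_nonneg_right hy4 hy0
      linarith only [hL2z, hzy, h44, hyy]
    have hLk : L ≤ k := by exact_mod_cast hLkR
    haveI hIP : IsProbabilityMeasure (pSpace (Finset (Fin (2*k-1))) p) :=
      pSpace_isProb hp0 hp1
    set 𝒜 : Finset (Finset (Finset (Fin (2*k-1)))) :=
      ((Lk k).powerset).filter
        (fun A => TwoLinkedLow k A ∧ 2 ≤ A.card ∧ A.card ≤ L) with h𝒜
    set mA : Finset (Finset (Fin (2*k-1))) → ℕ :=
      fun A => ⌊c * ((nbrLow k A).card : ℝ) + (A.card : ℝ)⌋₊ with hmA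
    set E : Finset (Finset (Fin (2*k-1))) → Set (Finset (Fin (2*k-1)) → Bool) :=
      fun A => {ω | (((nbrLow k A).filter fun i => ω i = true)).card ≤ mA A} with hE
    -- event inclusion
    have hincl : {ω : Finset (Fin (2*k-1)) → Bool |
        ¬ ∀ A : Finset (Finset (Fin (2 * k - 1))),
            A ⊆ Lk k → ClosedLow k A → TwoLinkedLow k A →
            1 < A.card → (A.card : ℝ) ≤ Real.logb 2 k →
            c * (((nbrLow k A).card : ℝ) - A.card) ≤
              ((nbrLow k A ∩ sample ω).card : ℝ) - ((A ∩ sample ω).card : ℝ)}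
        ⊆ ⋃ A ∈ 𝒜, E A := by
      intro ω hω
      simp only [Set.mem_setOf_eq] at hω
      push_neg at hω
      obtain ⟨A, hsub, hcl, htl, hcard, hlog, hineq⟩ := hω
      have haL : A.card ≤ L := Nat.le_floor hlog
      have hA𝒜 : A ∈ 𝒜 := by
        rw [h𝒜, Finset.mem_filter, Finset.mem_powerset]
        exact ⟨hsub, htl, hcard, haL⟩
      have hZ : ((A ∩ sample ω).card : ℝ) ≤ (A.card : ℝ) := by
        exact_mod_cast Finset.card_le_card Finset.inter_subset_left
      have hinter : nbrLow k A ∩ sample ω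
          = (nbrLow k A).filter (fun i => ω i = true) := by
        ext w; simp [sample]
      have hY : (((nbrLow k A).filter fun i => ω i = true)).card ≤ mA A := by
        rw [hmA]
        apply Nat.le_floor
        rw [← hinter]
        have hexp : c * (((nbrLow k A).card : ℝ) - A.card)
            = c * ((nbrLow k A).card : ℝ) - c * (A.card : ℝ) := by ring
        have hca : (0:ℝ) ≤ c * (A.card : ℝ) := by positivity
        have h1 := hineq
        linarith only [h1, hZ, hca, hexp]
      exact Set.mem_biUnion hA𝒜 hY
    -- measure bound
    have hmeas : ((pSpace (Finset (Fin (2*k-1))) p) {ω : Finset (Fin (2*k-1)) → Bool |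
        ¬ ∀ A : Finset (Finset (Fin (2 * k - 1))),
            A ⊆ Lk k → ClosedLow k A → TwoLinkedLow k A →
            1 < A.card → (A.card : ℝ) ≤ Real.logb 2 k →
            c * (((nbrLow k A).card : ℝ) - A.card) ≤
              ((nbrLow k A ∩ sample ω).card : ℝ) - ((A ∩ sample ω).card : ℝ)}).toReal
        ≤ ∑ A ∈ 𝒜, ((pSpace (Finset (Fin (2*k-1))) p) (E A)).toReal := by
      rw [← ENNReal.toReal_sum (fun A _ => measure_ne_top _ _)]
      apply ENNReal.toReal_mono
      · exact (ENNReal.sum_lt_top.2 fun A _ => measure_lt_top _ _).ne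
      · exact le_trans (measure_mono hincl) (measure_biUnion_finset_le 𝒜 E)
    -- per-A bound
    set U : ℝ := Real.exp (-(2*θ)*((k:ℝ) - L) + (L:ℝ) * lam) with hU
    have hperA : ∀ A ∈ 𝒜, ((pSpace (Finset (Fin (2*k-1))) p) (E A)).toReal ≤ U := by
      intro A hA
      rw [h𝒜, Finset.mem_filter, Finset.mem_powerset] at hA
      obtain ⟨hsub, htl, ha2, haL⟩ := hA
      have hch := chernoff (ι := Finset (Fin (2*k-1))) hp0 hp1 (nbrLow k A) (mA A)
        hτ0 (le_of_lt hτ1)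
      apply le_trans hch
      have hmfl : ((mA A : ℝ)) ≤ c * ((nbrLow k A).card : ℝ) + (A.card : ℝ) := by
        rw [hmA]
        exact Nat.floor_le (by positivity)
      have hsn : sC ^ (nbrLow k A).card
          = Real.exp (((nbrLow k A).card : ℝ) * Real.log sC) := by
        rw [← Real.log_pow, Real.exp_log (pow_pos hs0 _)]
      have hτm : τ ^ (mA A) = Real.exp ((mA A : ℝ) * Real.log τ) := by
        rw [← Real.log_pow, Real.exp_log (pow_pos hτ0 _)]
      rw [← hsdef, hsn, hτm, ← Real.exp_sub, hU, Real.exp_le_exp]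
      set n : ℝ := ((nbrLow k A).card : ℝ) with hn
      set a : ℝ := (A.card : ℝ) with ha
      have hNlow : a * (k:ℝ) ≤ n + a*a := by
        rw [hn, ha]
        exact_mod_cast nbrLow_card_lower hk1 hsub
      have haLR : a ≤ (L:ℝ) := by rw [ha]; exact_mod_cast haL
      have ha2R : (2:ℝ) ≤ a := by rw [ha]; exact_mod_cast ha2
      have ha0 : (0:ℝ) ≤ a := by linarith only [ha2R]
      have hn2 : 2*((k:ℝ) - (L:ℝ)) ≤ n := by
        have hka : a ≤ (k:ℝ) := le_trans haLR hLkR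
        have hprod : (0:ℝ) ≤ (a - 2)*((k:ℝ) - a) :=
          mul_nonneg (by linarith only [ha2R]) (by linarith only [hka])
        nlinarith only [hNlow, hprod, haLR, hLkR, ha2R]
      have hmlam : (mA A : ℝ) * lam ≤ (c * n + a) * lam :=
        mul_le_mul_of_nonneg_right hmfl hlam.le
      have hθn : θ * (2*((k:ℝ) - (L:ℝ))) ≤ θ * n :=
        mul_le_mul_of_nonneg_left hn2 hθ.le
      have halam : a * lam ≤ (L:ℝ) * lam := mul_le_mul_of_nonneg_right haLR hlam.le
      calc n * Real.log sC - (mA A : ℝ) * Real.log τ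
          = n * Real.log sC + (mA A : ℝ) * lam := by rw [hlamdef]; ring
        _ ≤ n * Real.log sC + (c*n + a) * lam := by linarith only [hmlam]
        _ = (Real.log sC + c*lam) * n + a * lam := by ring
        _ = -θ * n + a * lam := by rw [hclam, hlogs]
        _ ≤ -(2*θ)*((k:ℝ) - (L:ℝ)) + (L:ℝ) * lam := by
            linarith only [hθn, halam]
    -- counting
    have hcountN : 𝒜.card ≤ 4^k * ((L+1) * (3*k^2)^(L*L)) := by
      apply le_trans (count_badsets hk1 L)
      apply Nat.mul_le_mul_left
      apply Nat.mul_le_mul_left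
      have h1 : 1 + k*(2*k-1) ≤ 3*k^2 := by
        have h2 : k*(2*k-1) ≤ k*(2*k) := Nat.mul_le_mul_left k (Nat.sub_le _ _)
        have h3 : 1 ≤ k^2 := Nat.one_le_pow _ _ (by omega)
        calc 1 + k*(2*k-1) ≤ 1 + k*(2*k) := Nat.add_le_add_left h2 1
          _ = 1 + 2*k^2 := by ring
          _ ≤ 3*k^2 := by linarith only [h3]
      have hbase : (1 + k*(2*k-1))^(L-1) + 1 ≤ (3*k^2)^L := by
        have h3 : 1 ≤ (3*k^2)^(L-1) := Nat.one_le_pow _ _ (by positivity)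
        have h4 : 2 ≤ 3*k^2 := by linarith only [Nat.one_le_pow 2 k (show 0 < k by omega)]
        calc (1 + k*(2*k-1))^(L-1) + 1
            ≤ (3*k^2)^(L-1) + (3*k^2)^(L-1) := by
              have := Nat.pow_le_pow_left h1 (L-1); omega
          _ = 2 * (3*k^2)^(L-1) := by ring
          _ ≤ (3*k^2) * (3*k^2)^(L-1) := Nat.mul_le_mul_right _ h4
          _ = (3*k^2)^(L-1+1) := by rw [pow_succ]; ring
          _ = (3*k^2)^L := by rw [Nat.sub_add_cancel hL1]
      calc ((1 + k*(2*k-1))^(L-1) + 1)^L ≤ ((3*k^2)^L)^L := Nat.pow_le_pow_left hbase L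
        _ = (3*k^2)^(L*L) := by rw [← pow_mul]
    -- real bound on the count
    have hcardR : (𝒜.card : ℝ)
        ≤ Real.exp ((k:ℝ) * Real.log 4 + (L:ℝ) + ((L:ℝ)*(L:ℝ)) * (2 + 2*z)) := by
      have h1 : (𝒜.card : ℝ) ≤ (4:ℝ)^k * (((L:ℝ)+1) * ((3*(k:ℝ)^2))^(L*L)) := by
        exact_mod_cast hcountN
      apply le_trans h1
      have h4 : (4:ℝ)^k = Real.exp ((k:ℝ) * Real.log 4) := by
        rw [← Real.log_pow, Real.exp_log (by positivity)]
      have hL1e : ((L:ℝ)+1) ≤ Real.exp (L:ℝ) := by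
        have h := Real.add_one_le_exp (L:ℝ); linarith only [h]
      have h3k : ((3*(k:ℝ)^2))^(L*L) ≤ Real.exp (((L:ℝ)*(L:ℝ)) * (2 + 2*z)) := by
        have hpos : (0:ℝ) < 3*(k:ℝ)^2 := by positivity
        have heq : (3*(k:ℝ)^2)^(L*L)
            = Real.exp (((L*L : ℕ):ℝ) * Real.log (3*(k:ℝ)^2)) := by
          rw [← Real.log_pow, Real.exp_log (pow_pos hpos _)]
        rw [heq, Real.exp_le_exp]
        have hlogval : Real.log (3*(k:ℝ)^2) ≤ 2 + 2*z := by
          rw [Real.log_mul (by norm_num) (by positivity), Real.log_pow, hzdef]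
          have hlog3 : Real.log 3 ≤ 2 := by
            have h := Real.log_le_sub_one_of_pos (show (0:ℝ) < 3 by norm_num)
            linarith only [h]
          push_cast
          linarith only [hlog3]
        have hLLcast : ((L*L : ℕ):ℝ) = (L:ℝ)*(L:ℝ) := by push_cast; ring
        rw [hLLcast]
        apply mul_le_mul_of_nonneg_left hlogval (by positivity)
      calc (4:ℝ)^k * (((L:ℝ)+1) * ((3*(k:ℝ)^2))^(L*L))
          ≤ Real.exp ((k:ℝ)*Real.log 4)
            * (Real.exp (L:ℝ) * Real.exp (((L:ℝ)*(L:ℝ))*(2+2*z))) := by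
            rw [h4]
            apply mul_le_mul_of_nonneg_left _ (le_of_lt (Real.exp_pos _))
            apply mul_le_mul hL1e h3k (by positivity) (le_of_lt (Real.exp_pos _))
        _ = Real.exp ((k:ℝ) * Real.log 4 + (L:ℝ) + ((L:ℝ)*(L:ℝ)) * (2 + 2*z)) := by
            rw [← Real.exp_add, ← Real.exp_add]
            congr 1
            ring
    -- final chain
    have hsumU : ∑ A ∈ 𝒜, ((pSpace (Finset (Fin (2*k-1))) p) (E A)).toReal
        ≤ (𝒜.card : ℝ) * U := by
      have := Finset.sum_le_card_nsmul 𝒜 _ U hperA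
      rwa [nsmul_eq_mul] at this
    have hkz : (k:ℝ) = Real.exp z := by rw [hzdef, Real.exp_log hkpos]
    have hU0 : 0 ≤ U := le_of_lt (Real.exp_pos _)
    have hlog4 : Real.log 4 = 2 * Real.log 2 := by
      rw [show (4:ℝ) = 2^2 by norm_num, Real.log_pow]; push_cast; ring
    have hfinalexp : z + ((k:ℝ) * Real.log 4 + (L:ℝ) + ((L:ℝ)*(L:ℝ)) * (2 + 2*z))
        + (-(2*θ)*((k:ℝ) - (L:ℝ)) + (L:ℝ) * lam) ≤ -δ * (k:ℝ) := by
      have hFeq : z + ((k:ℝ) * Real.log 4 + (L:ℝ) + ((L:ℝ)*(L:ℝ)) * (2 + 2*z))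
          + (-(2*θ)*((k:ℝ) - (L:ℝ)) + (L:ℝ) * lam)
          = z + (L:ℝ) + 2*((L:ℝ)*(L:ℝ)) + 2*((L:ℝ)*(L:ℝ))*z
            + 2*θ*(L:ℝ) + lam*(L:ℝ) - 2*δ*(k:ℝ) := by
        rw [hlog4, hθdef]; ring
      rw [hFeq]
      have hzz : 1 ≤ z^2 := by nlinarith only [hz1, hz0]
      have hz3 : z ≤ z^3 := by nlinarith only [hz1, hz0, hzz]
      have hb1 : (L:ℝ) ≤ 2*z^3 := by linarith only [hL2z, hz3]
      have hLL : (L:ℝ)*(L:ℝ) ≤ 4*z^2 := by nlinarith only [hL2z, hLr0]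
      have hz23 : z^2 ≤ z^3 := by nlinarith only [hz1, sq_nonneg z]
      have hb2 : (L:ℝ)*(L:ℝ) ≤ 4*z^3 := by linarith only [hLL, hz23]
      have hb3 : ((L:ℝ)*(L:ℝ))*z ≤ 4*z^3 := by nlinarith only [hLL, hz0]
      have hb4 : θ*(L:ℝ) ≤ 2*θ*z^3 := by nlinarith only [hb1, hθ.le]
      have hb5 : lam*(L:ℝ) ≤ 2*lam*z^3 := by nlinarith only [hb1, hlam.le]
      have hC1z : C1 * z^3 = 19*z^3 + 4*θ*z^3 + 2*lam*z^3 := by rw [hC1def]; ring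
      linarith only [hCz, hz3, hb1, hb2, hb3, hb4, hb5, hC1z]
    calc (k:ℝ) * ((pSpace (Finset (Fin (2*k-1))) p) {ω : Finset (Fin (2*k-1)) → Bool |
        ¬ ∀ A : Finset (Finset (Fin (2 * k - 1))),
            A ⊆ Lk k → ClosedLow k A → TwoLinkedLow k A →
            1 < A.card → (A.card : ℝ) ≤ Real.logb 2 k →
            c * (((nbrLow k A).card : ℝ) - A.card) ≤
              ((nbrLow k A ∩ sample ω).card : ℝ) - ((A ∩ sample ω).card : ℝ)}).toReal
        ≤ (k:ℝ) * ((𝒜.card : ℝ) * U) :=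
          mul_le_mul_of_nonneg_left (le_trans hmeas hsumU) (Nat.cast_nonneg k)
      _ ≤ Real.exp z * (Real.exp ((k:ℝ) * Real.log 4 + (L:ℝ)
            + ((L:ℝ)*(L:ℝ)) * (2 + 2*z)) * U) := by
          have hBU : (𝒜.card : ℝ) * U ≤ Real.exp ((k:ℝ) * Real.log 4 + (L:ℝ)
            + ((L:ℝ)*(L:ℝ)) * (2 + 2*z)) * U := mul_le_mul_of_nonneg_right hcardR hU0
          have h0 : (0:ℝ) ≤ ((𝒜.card : ℝ)) * U := mul_nonneg (Nat.cast_nonneg _) hU0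
          exact mul_le_mul (le_of_eq hkz) hBU h0 (le_of_lt (Real.exp_pos _))
      _ = Real.exp (z + ((k:ℝ) * Real.log 4 + (L:ℝ) + ((L:ℝ)*(L:ℝ)) * (2 + 2*z))
            + (-(2*θ)*((k:ℝ) - (L:ℝ)) + (L:ℝ) * lam)) := by
          rw [hU, ← Real.exp_add, ← Real.exp_add]
          congr 1
          ring
      _ ≤ Real.exp (-δ * (k:ℝ)) := Real.exp_le_exp.2 hfinalexp
      _ = Real.exp (-δ) ^ k := by
          rw [← Real.exp_nat_mul]; ring_nf
  · exact tendsto_pow_atTop_nhds_zero_of_lt_one (Real.exp_nonneg _)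
      (by rw [← Real.exp_zero]; exact Real.exp_lt_exp.2 (by linarith))
end

section
/- Fix a constant p with 3/4 < p < 1 and let X = 𝒫(n)_p. Then with high probability no set v ∈ [n]^(k) with k ∈ {⌊n/2⌋−1, ⌊n/2⌋, ⌈n/2⌉, ⌈n/2⌉+1} is nearly isolated with respect to X. -/
open MeasureTheory Finset Filter
open scoped ENNReal

/-- A set `v` of size `k` is nearly isolated with respect to `X` if `v ∈ X` and:
for `k ≥ ⌈n/2⌉` (i.e. `2k ≥ n`) at most one `(k-1)`-subset of `v` is in `X`;
for `k ≤ ⌊n/2⌋` (i.e. `2k ≤ n`) at most one `(k+1)`-superset of `v` is in `X`. -/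
def NearlyIsolated (n : ℕ) (X : Finset (Finset (Fin n))) (v : Finset (Fin n)) : Prop :=
  v ∈ X ∧
    ((n ≤ 2 * v.card ∧ (X.filter (fun w => w ⊆ v ∧ w.card + 1 = v.card)).card ≤ 1) ∨
     (2 * v.card ≤ n ∧ (X.filter (fun w => v ⊆ w ∧ w.card = v.card + 1)).card ≤ 1))

section Helpers

lemma bern_false {p : ℝ} : bern p {false} = ENNReal.ofReal (1 - p) := by
  simp [bern, Measure.dirac_apply]

lemma bern_prob {p : ℝ} (h0 : 0 ≤ p) (h1 : p ≤ 1) : IsProbabilityMeasure (bern p) := by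
  constructor
  have : ENNReal.ofReal p + ENNReal.ofReal (1 - p) = 1 := by
    rw [← ENNReal.ofReal_add h0 (by linarith), ← ENNReal.ofReal_one]
    norm_num
  simp [bern, Measure.dirac_apply, this]

lemma pSpace_prob {ι : Type*} [Fintype ι] {p : ℝ} (h0 : 0 ≤ p) (h1 : p ≤ 1) :
    IsProbabilityMeasure (pSpace ι p) := by
  haveI := bern_prob h0 h1
  unfold pSpace
  infer_instance

instance pSpace_msc {ι : Type*} [Fintype ι] : MeasurableSingletonClass (ι → Bool) := by
  constructor
  intro f
  have : ({f} : Set (ι → Bool)) = Set.pi Set.univ (fun i => {f i}) := by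
    ext g; simp [Set.mem_pi, funext_iff]
  rw [this]
  exact MeasurableSet.univ_pi fun i => MeasurableSet.singleton _

lemma allMeasurable {ι : Type*} [Fintype ι] (s : Set (ι → Bool)) : MeasurableSet s :=
  s.toFinite.measurableSet

lemma pSpace_allFalse {ι : Type*} [Fintype ι] [DecidableEq ι] {p : ℝ} (h0 : 0 ≤ p) (h1 : p ≤ 1)
    (T : Finset ι) :
    pSpace ι p {ω | ∀ i ∈ T, ω i = false} = ENNReal.ofReal (1 - p) ^ T.card := by
  haveI := bern_prob h0 h1
  have hs : {ω : ι → Bool | ∀ i ∈ T, ω i = false}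
      = Set.pi Set.univ (fun i => if i ∈ T then ({false} : Set Bool) else Set.univ) := by
    ext ω
    simp only [Set.mem_pi, Set.mem_univ, Set.mem_setOf_eq, true_implies]
    constructor
    · intro h i; by_cases hi : i ∈ T <;> simp [hi, h]
    · intro h i hi; have := h i; simpa [hi] using this
  rw [hs, pSpace, Measure.pi_pi]
  have : ∀ i : ι, bern p (if i ∈ T then ({false} : Set Bool) else Set.univ)
      = if i ∈ T then ENNReal.ofReal (1 - p) else 1 := by
    intro i; split_ifs with hi
    · exact bern_false
    · exact measure_univ
  simp_rw [this]
  rw [Finset.prod_ite_mem, Finset.univ_inter, Finset.prod_const]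

lemma atMostOne_bound {ι : Type*} [Fintype ι] [DecidableEq ι] {p : ℝ} (h0 : 0 ≤ p) (h1 : p ≤ 1)
    (S : Finset ι) :
    pSpace ι p {ω | ((S.filter fun i => ω i = true)).card ≤ 1}
      ≤ ((S.card : ℝ≥0∞) + 1) * ENNReal.ofReal (1 - p) ^ (S.card - 1) := by
  set q := ENNReal.ofReal (1 - p) with hq
  have hq1 : q ≤ 1 := ENNReal.ofReal_le_one.2 (by linarith)
  have hsub : {ω : ι → Bool | ((S.filter fun i => ω i = true)).card ≤ 1}
      ⊆ {ω | ∀ i ∈ S, ω i = false} ∪ ⋃ j ∈ S, {ω | ∀ i ∈ S.erase j, ω i = false} := by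
    intro ω hω
    simp only [Set.mem_setOf_eq] at hω
    by_cases h : ∃ j ∈ S, ω j = true
    · obtain ⟨j, hj, hωj⟩ := h
      refine Set.mem_union_right _ (Set.mem_biUnion hj ?_)
      intro i hi
      rcases Finset.mem_erase.1 hi with ⟨hij, hiS⟩
      cases hb : ω i
      · rfl
      · exfalso
        have hpair : ({i, j} : Finset ι) ⊆ S.filter fun k => ω k = true := by
          intro x hx
          rcases Finset.mem_insert.1 hx with rfl | hx
          · exact Finset.mem_filter.2 ⟨hiS, hb⟩
          · rw [Finset.mem_singleton.1 hx]; exact Finset.mem_filter.2 ⟨hj, hωj⟩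
        have := Finset.card_le_card hpair
        rw [Finset.card_pair hij] at this
        omega
    · push_neg at h
      refine Set.mem_union_left _ ?_
      intro i hi
      cases hb : ω i
      · rfl
      · exact absurd hb (h i hi)
  calc pSpace ι p {ω | ((S.filter fun i => ω i = true)).card ≤ 1}
      ≤ pSpace ι p ({ω | ∀ i ∈ S, ω i = false} ∪ ⋃ j ∈ S, {ω | ∀ i ∈ S.erase j, ω i = false}) :=
        measure_mono hsub
    _ ≤ pSpace ι p {ω | ∀ i ∈ S, ω i = false}
        + pSpace ι p (⋃ j ∈ S, {ω | ∀ i ∈ S.erase j, ω i = false}) := measure_union_le _ _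
    _ ≤ q ^ S.card + ∑ j ∈ S, pSpace ι p {ω | ∀ i ∈ S.erase j, ω i = false} := by
        rw [pSpace_allFalse h0 h1 S]
        exact add_le_add_right (measure_biUnion_finset_le S _) _
    _ = q ^ S.card + ∑ j ∈ S, q ^ (S.card - 1) := by
        congr 1
        refine Finset.sum_congr rfl fun j hj => ?_
        rw [pSpace_allFalse h0 h1, Finset.card_erase_of_mem hj]
    _ = q ^ S.card + (S.card : ℝ≥0∞) * q ^ (S.card - 1) := by
        rw [Finset.sum_const, nsmul_eq_mul]
    _ ≤ q ^ (S.card - 1) + (S.card : ℝ≥0∞) * q ^ (S.card - 1) := by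
        exact add_le_add_left (pow_le_pow_right_of_le_one' hq1 (Nat.sub_le _ _)) _
    _ = ((S.card : ℝ≥0∞) + 1) * q ^ (S.card - 1) := by ring

def downF {n : ℕ} (v : Finset (Fin n)) : Finset (Finset (Fin n)) :=
  Finset.univ.filter (fun w => w ⊆ v ∧ w.card + 1 = v.card)

def upF {n : ℕ} (v : Finset (Fin n)) : Finset (Finset (Fin n)) :=
  Finset.univ.filter (fun w => v ⊆ w ∧ w.card = v.card + 1)

lemma downF_eq {n : ℕ} (v : Finset (Fin n)) : downF v = v.image (fun i => v.erase i) := by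
  ext w
  simp only [downF, Finset.mem_filter, Finset.mem_univ, true_and, Finset.mem_image]
  constructor
  · rintro ⟨hsub, hcard⟩
    have h1 : (v \ w).card = 1 := by
      rw [Finset.card_sdiff_of_subset hsub]; omega
    obtain ⟨i, hi⟩ := Finset.card_eq_one.1 h1
    have hiv : i ∈ v := by
      have : i ∈ v \ w := hi ▸ Finset.mem_singleton_self i
      exact (Finset.mem_sdiff.1 this).1
    refine ⟨i, hiv, ?_⟩
    have := Finset.sdiff_sdiff_eq_self hsub
    rw [hi] at this
    rw [← this, Finset.sdiff_singleton_eq_erase]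
  · rintro ⟨i, hi, rfl⟩
    exact ⟨Finset.erase_subset _ _, Finset.card_erase_add_one hi⟩

lemma downF_card {n : ℕ} (v : Finset (Fin n)) : (downF v).card = v.card := by
  rw [downF_eq, Finset.card_image_of_injOn (Finset.erase_injOn v)]

lemma upF_eq {n : ℕ} (v : Finset (Fin n)) : upF v = vᶜ.image (fun i => insert i v) := by
  ext w
  simp only [upF, Finset.mem_filter, Finset.mem_univ, true_and, Finset.mem_image,
    Finset.mem_compl]
  constructor
  · rintro ⟨hsub, hcard⟩
    have h1 : (w \ v).card = 1 := by
      rw [Finset.card_sdiff_of_subset hsub]; omega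
    obtain ⟨i, hi⟩ := Finset.card_eq_one.1 h1
    have hiv : i ∉ v := by
      have : i ∈ w \ v := hi ▸ Finset.mem_singleton_self i
      exact (Finset.mem_sdiff.1 this).2
    refine ⟨i, hiv, ?_⟩
    have := Finset.union_sdiff_of_subset hsub
    rw [hi] at this
    rw [← this, Finset.union_comm, ← Finset.insert_eq]
  · rintro ⟨i, hi, rfl⟩
    exact ⟨Finset.subset_insert _ _, Finset.card_insert_of_notMem hi⟩

lemma upF_card {n : ℕ} (v : Finset (Fin n)) : (upF v).card = n - v.card := by
  rw [upF_eq, Finset.card_image_of_injOn]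
  · rw [Finset.card_compl, Fintype.card_fin]
  · intro i hi j hj hij
    simp only [Finset.coe_compl, Set.mem_compl_iff, Finset.mem_coe] at hi hj
    have hij' : insert i v = insert j v := hij
    have : i ∈ insert j v := hij' ▸ Finset.mem_insert_self i v
    rcases Finset.mem_insert.1 this with h | h
    · exact h
    · exact absurd h hi

lemma NI_filter_eq {n : ℕ} (ω : Finset (Fin n) → Bool) (v : Finset (Fin n)) :
    ((sample ω).filter (fun w => w ⊆ v ∧ w.card + 1 = v.card)).card
      = ((downF v).filter (fun w => ω w = true)).card ∧
    ((sample ω).filter (fun w => v ⊆ w ∧ w.card = v.card + 1)).card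
      = ((upF v).filter (fun w => ω w = true)).card := by
  constructor <;>
  · congr 1
    ext w
    simp only [sample, downF, upF, Finset.mem_filter, Finset.mem_univ, true_and]
    tauto

lemma NI_measure_bound {p : ℝ} (h0 : 0 ≤ p) (h1 : p ≤ 1) (n : ℕ) (v : Finset (Fin n)) :
    pSpace (Finset (Fin n)) p {ω | NearlyIsolated n (sample ω) v}
      ≤ 2 * ((n : ℝ≥0∞) + 1) * ENNReal.ofReal (1 - p) ^ (n / 2 - 1) := by
  set q := ENNReal.ofReal (1 - p) with hq
  have hq1 : q ≤ 1 := ENNReal.ofReal_le_one.2 (by linarith)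
  have hvn : v.card ≤ n := by
    simpa using Finset.card_le_univ v
  have key : ∀ S : Finset (Finset (Fin n)), n / 2 ≤ S.card → S.card ≤ n →
      pSpace (Finset (Fin n)) p {ω | ((S.filter fun w => ω w = true)).card ≤ 1}
        ≤ ((n : ℝ≥0∞) + 1) * q ^ (n / 2 - 1) := by
    intro S hS1 hS2
    refine le_trans (atMostOne_bound h0 h1 S) (mul_le_mul' ?_ ?_)
    · exact add_le_add_left (by exact_mod_cast Nat.cast_le.2 hS2) 1
    · exact pow_le_pow_right_of_le_one' hq1 (by omega)
  have hsub : {ω : Finset (Fin n) → Bool | NearlyIsolated n (sample ω) v}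
      ⊆ (if n ≤ 2 * v.card then
            {ω : Finset (Fin n) → Bool | (((downF v).filter fun w => ω w = true)).card ≤ 1}
          else ∅)
        ∪ (if 2 * v.card ≤ n then
            {ω : Finset (Fin n) → Bool | (((upF v).filter fun w => ω w = true)).card ≤ 1}
          else ∅) := by
    rintro ω ⟨-, h | h⟩
    · obtain ⟨hle, hcard⟩ := h
      refine Set.mem_union_left _ ?_
      rw [if_pos hle]
      rw [(NI_filter_eq ω v).1] at hcard
      exact hcard
    · obtain ⟨hle, hcard⟩ := h
      refine Set.mem_union_right _ ?_
      rw [if_pos hle]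
      rw [(NI_filter_eq ω v).2] at hcard
      exact hcard
  refine le_trans (le_trans (measure_mono hsub) (measure_union_le _ _)) ?_
  have two_eq : (2 : ℝ≥0∞) * (((n : ℝ≥0∞) + 1) * q ^ (n / 2 - 1))
      = ((n : ℝ≥0∞) + 1) * q ^ (n / 2 - 1) + ((n : ℝ≥0∞) + 1) * q ^ (n / 2 - 1) := by
    ring
  rw [mul_assoc, two_eq]
  refine add_le_add ?_ ?_
  · split_ifs with h
    · refine key _ ?_ ?_ <;> rw [downF_card] <;> omega
    · simp
  · split_ifs with h
    · refine key _ ?_ ?_ <;> rw [upF_card] <;> omega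
    · simp

end Helpers

/-- For constant `3/4 < p < 1`, with high probability no set of size
`⌊n/2⌋ - 1`, `⌊n/2⌋`, `⌈n/2⌉`, or `⌈n/2⌉ + 1` is nearly isolated with respect to
`X = 𝒫(n)_p`. -/
theorem statement_13 (p : ℝ) (hp : 3 / 4 < p) (hp1 : p < 1) :
    Filter.Tendsto (fun n : ℕ =>
      ((pSpace (Finset (Fin n)) p)
        {ω | ∀ v : Finset (Fin n),
          (v.card = n / 2 - 1 ∨ v.card = n / 2 ∨ v.card = (n + 1) / 2 ∨
            v.card = (n + 1) / 2 + 1) →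
          ¬ NearlyIsolated n (sample ω) v}).toReal)
      Filter.atTop (nhds 1) := by
  have hp0 : (0:ℝ) ≤ p := by linarith
  have hp1' : p ≤ 1 := hp1.le
  have hc0 : (0:ℝ) < 1 - p := by linarith
  have hc4 : (1:ℝ) - p < 1/4 := by linarith
  set c : ℝ := 1 - p with hc
  set bad : (n : ℕ) → Set (Finset (Fin n) → Bool) := fun n =>
    {ω | ∃ v : Finset (Fin n), (v.card = n / 2 - 1 ∨ v.card = n / 2 ∨ v.card = (n + 1) / 2 ∨
            v.card = (n + 1) / 2 + 1) ∧ NearlyIsolated n (sample ω) v} with hbad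
  set x : ℕ → ℝ := fun n => ((pSpace (Finset (Fin n)) p) (bad n)).toReal with hx
  -- upper bound in ℝ≥0∞
  have hb : ∀ n : ℕ, pSpace (Finset (Fin n)) p (bad n) ≤
      (2:ℝ≥0∞)^n * (2 * ((n:ℝ≥0∞)+1) * ENNReal.ofReal c ^ (n/2 - 1)) := by
    intro n
    have h1 : bad n ⊆ ⋃ v ∈ (Finset.univ : Finset (Finset (Fin n))),
        {ω | NearlyIsolated n (sample ω) v} := by
      rintro ω ⟨v, -, hv⟩
      exact Set.mem_biUnion (Finset.mem_univ v) hv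
    refine le_trans (measure_mono h1) (le_trans (measure_biUnion_finset_le _ _) ?_)
    refine le_trans (Finset.sum_le_sum fun v _ => NI_measure_bound hp0 hp1' n v) ?_
    rw [Finset.sum_const, nsmul_eq_mul, Finset.card_univ, Fintype.card_finset, Fintype.card_fin]
    rw [mul_assoc]
    norm_cast
  set s : ℝ := Real.sqrt c with hs
  have hs0 : 0 < s := Real.sqrt_pos.2 hc0
  have hs12 : s < 1/2 := (Real.sqrt_lt' (by norm_num)).2 (by rw [hc]; norm_num; linarith)
  have hcs : c = s^2 := (Real.sq_sqrt hc0.le).symm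
  have hxle : ∀ n : ℕ, 4 ≤ n → x n ≤ (2/s^4) * (((n:ℝ)+1) * (2*s)^n) := by
    intro n hn
    have hBtop : (2:ℝ≥0∞)^n * (2 * ((n:ℝ≥0∞)+1) * ENNReal.ofReal c ^ (n/2 - 1)) ≠ ⊤ := by
      refine ENNReal.mul_ne_top (ENNReal.pow_ne_top ENNReal.ofNat_ne_top)
        (ENNReal.mul_ne_top (ENNReal.mul_ne_top ENNReal.ofNat_ne_top ?_)
          (ENNReal.pow_ne_top ENNReal.ofReal_ne_top))
      simp [ENNReal.add_ne_top]
    have h2 : x n ≤ ((2:ℝ≥0∞)^n * (2 * ((n:ℝ≥0∞)+1)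
        * ENNReal.ofReal c ^ (n/2 - 1))).toReal := ENNReal.toReal_mono hBtop (hb n)
    have h3 : ((2:ℝ≥0∞)^n * (2 * ((n:ℝ≥0∞)+1) * ENNReal.ofReal c ^ (n/2 - 1))).toReal
        = (2:ℝ)^n * (2 * ((n:ℝ)+1) * c ^ (n/2 - 1)) := by
      rw [ENNReal.toReal_mul, ENNReal.toReal_mul, ENNReal.toReal_mul, ENNReal.toReal_pow,
        ENNReal.toReal_pow, ENNReal.toReal_ofReal hc0.le,
        ENNReal.toReal_add (ENNReal.natCast_ne_top n) ENNReal.one_ne_top,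
        ENNReal.toReal_natCast]
      norm_num
    have hpow : c ^ (n/2 - 1) ≤ s ^ (n - 4) := by
      rw [hcs, ← pow_mul]
      exact pow_le_pow_of_le_one hs0.le (by linarith) (by omega)
    have h4 : (2:ℝ)^n * (2 * ((n:ℝ)+1) * c ^ (n/2 - 1))
        ≤ (2:ℝ)^n * (2 * ((n:ℝ)+1) * s ^ (n - 4)) := by
      have hn0 : (0:ℝ) ≤ (n:ℝ) + 1 := by positivity
      gcongr
    have h5 : (2:ℝ)^n * (2 * ((n:ℝ)+1) * s ^ (n - 4))
        = (2/s^4) * (((n:ℝ)+1) * (2*s)^n) := by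
      have hsn : s ^ n = s^(n-4) * s^4 := by rw [← pow_add]; congr 1; omega
      rw [mul_pow, hsn]
      field_simp
    rw [h3] at h2
    linarith
  have t1 : Tendsto (fun n : ℕ => ((n:ℝ)) * (2*s)^n) atTop (nhds 0) := by
    have hnorm : ‖2*s‖ < 1 := by
      rw [Real.norm_eq_abs, abs_of_pos (by positivity)]; linarith
    have := (summable_pow_mul_geometric_of_norm_lt_one 1 hnorm).tendsto_atTop_zero
    simpa using this
  have t2 : Tendsto (fun n : ℕ => (2*s)^n) atTop (nhds 0) :=
    tendsto_pow_atTop_nhds_zero_of_lt_one (by positivity) (by linarith)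
  have t3 : Tendsto (fun n : ℕ => ((n:ℝ)+1) * (2*s)^n) atTop (nhds 0) := by
    have := t1.add t2
    simp only [add_zero] at this
    refine this.congr fun n => ?_
    ring
  have t4 : Tendsto (fun n : ℕ => (2/s^4) * (((n:ℝ)+1)*(2*s)^n)) atTop (nhds 0) := by
    simpa using t3.const_mul (2/s^4)
  have hx0 : ∀ n, 0 ≤ x n := fun n => ENNReal.toReal_nonneg
  have key : Tendsto x atTop (nhds 0) :=
    squeeze_zero' (Filter.Eventually.of_forall hx0) (Filter.eventually_atTop.2 ⟨4, hxle⟩) t4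
  -- goal = 1 - x n
  have hgoal : ∀ n : ℕ,
      ((pSpace (Finset (Fin n)) p)
        {ω | ∀ v : Finset (Fin n),
          (v.card = n / 2 - 1 ∨ v.card = n / 2 ∨ v.card = (n + 1) / 2 ∨
            v.card = (n + 1) / 2 + 1) →
          ¬ NearlyIsolated n (sample ω) v}).toReal = 1 - x n := by
    intro n
    haveI := pSpace_prob (ι := Finset (Fin n)) hp0 hp1'
    have hco : {ω : Finset (Fin n) → Bool | ∀ v : Finset (Fin n),
          (v.card = n / 2 - 1 ∨ v.card = n / 2 ∨ v.card = (n + 1) / 2 ∨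
            v.card = (n + 1) / 2 + 1) →
          ¬ NearlyIsolated n (sample ω) v} = (bad n)ᶜ := by
      ext ω
      simp only [hbad, Set.mem_compl_iff, Set.mem_setOf_eq, not_exists, not_and]
    rw [hco, prob_compl_eq_one_sub (allMeasurable _),
      ENNReal.toReal_sub_of_le prob_le_one ENNReal.one_ne_top]
    simp [hx]
  simp only [hgoal]
  have := key.const_sub 1
  simpa using this
end
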